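/- arXiv:2405.02939 — 3 statements merged into one kernel-verified Lean document; each statement's English description precedes it below -/
import Mathlib

section
/- If λ = (λ_1, ..., λ_n) ∈ Γ_k with λ_1 ≥ λ_2 ≥ ... ≥ λ_n and λ_i ≤ 0 for some i, then -λ_i ≤ ((n-k)/k) · λ_1. -/
/-
Let `μ` be `λ` with the entry `λ_i ≤ 0` deleted, and `μ|l` be `μ` with `μ_l` deleted; `μ` stays in
`Γ_k` because `σ_j(λ) = σ_j(μ) + λ_i σ_{j-1}(μ)`. For `j = k` this gives `-λ_i σ_{k-1}(μ) < σ_k(μ)`,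
while `k σ_k(μ) = ∑_l μ_l σ_{k-1}(μ|l)` and `∑_l σ_{k-1}(μ|l) = (n - k) σ_{k-1}(μ)` give
`k σ_k(μ) ≤ (n - k) λ_1 σ_{k-1}(μ)`, as soon as every `σ_{k-1}(μ|l)` is nonnegative.
That is the classical fact that deleting an entry maps `Γ_k` into `Γ_{k-1}`. If it failed, lowering
the deleted entry would make some `σ_j`, `j < k`, vanish while `σ_1, …, σ_k` stay nonnegative and
`σ_k` positive. This is impossible: the `(m - k)`-th derivative of `∏ (X + w_l)` is then real-rooted
with nonnegative coefficients and positive constant term, so its roots are negative and all its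
coefficients, positive multiples of `σ_k, …, σ_0`, are positive.
-/

open Finset

noncomputable def esym {n : ℕ} (k : ℕ) (lam : Fin n → ℝ) : ℝ :=
  ∑ s ∈ Finset.univ.powersetCard k, ∏ i ∈ s, lam i

noncomputable def esym1 {n : ℕ} (k : ℕ) (lam : Fin n → ℝ) (i : Fin n) : ℝ :=
  ∑ s ∈ (Finset.univ.erase i).powersetCard k, ∏ j ∈ s, lam j

noncomputable def esym2 {n : ℕ} (k : ℕ) (lam : Fin n → ℝ) (i j : Fin n) : ℝ :=
  ∑ s ∈ ((Finset.univ.erase i).erase j).powersetCard k, ∏ l ∈ s, lam l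

def GardingCone (n k : ℕ) : Set (Fin n → ℝ) :=
  {lam | ∀ j : ℕ, 1 ≤ j → j ≤ k → 0 < esym j lam}

open Polynomial

theorem Multiset.esymm_pos {s : Multiset ℝ} (hs : ∀ x ∈ s, 0 < x) {j : ℕ}
    (hj : j ≤ Multiset.card s) : 0 < s.esymm j := by
  have hne : s.powersetCard j ≠ 0 := by
    rw [← Multiset.card_pos, Multiset.card_powersetCard]
    exact Nat.choose_pos hj
  have := Multiset.sum_lt_sum_of_nonempty hne (f := fun _ => (0 : ℝ)) (g := Multiset.prod)
    fun t ht => Multiset.prod_pos fun x hx =>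
      hs x (Multiset.mem_of_le (Multiset.mem_powersetCard.1 ht).1 hx)
  simpa [Multiset.esymm] using this

theorem Polynomial.Splits.derivative_of_real {p : ℝ[X]} (hp : p.Splits) :
    p.derivative.Splits := by
  have hroots := splits_iff_card_roots.1 hp
  have := card_roots_le_derivative p
  have := natDegree_derivative_le p
  have := card_roots' (derivative p)
  exact splits_iff_card_roots.2 (by omega)

theorem Polynomial.Splits.iterate_derivative_of_real {p : ℝ[X]} (hp : p.Splits) (m : ℕ) :
    (derivative^[m] p).Splits := by
  induction m with
  | zero => exact hp
  | succ m ih => rw [Function.iterate_succ_apply']; exact ih.derivative_of_real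

theorem Polynomial.coeff_pos_of_splits_of_coeff_nonneg {q : ℝ[X]} (hq : q.Splits)
    (hnonneg : ∀ r, 0 ≤ q.coeff r) (h0 : 0 < q.coeff 0) {r : ℕ} (hr : r ≤ q.natDegree) :
    0 < q.coeff r := by
  have hq0 : q ≠ 0 := by rintro rfl; simp at h0
  -- `q > 0` on `[0, ∞)`, so all roots are negative
  have hroots : ∀ a ∈ q.roots.map Neg.neg, 0 < a := by
    simp only [Multiset.mem_map, forall_exists_index, and_imp]
    rintro _ a ha rfl
    by_contra! ha'
    have hpos : q.coeff 0 ≤ q.eval a := by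
      rw [eval_eq_sum_range]
      refine (single_le_sum (fun r _ => mul_nonneg (hnonneg r) (pow_nonneg (by linarith) r))
        (mem_range.2 (Nat.succ_pos _))).trans_eq' (by simp)
    rw [(mem_roots hq0).1 ha] at hpos
    linarith
  have hlead : 0 < q.leadingCoeff := (hnonneg _).lt_of_ne' (leadingCoeff_ne_zero.2 hq0)
  rw [coeff_eq_esymm_roots_of_splits hq hr, mul_assoc, ← Multiset.esymm_neg]
  exact mul_pos hlead (Multiset.esymm_pos hroots (by
    rw [Multiset.card_map, splits_iff_card_roots.1 hq]; omega))

noncomputable def esymmOn {α : Type*} (w : α → ℝ) (s : Finset α) (k : ℕ) : ℝ :=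
  ∑ t ∈ s.powersetCard k, ∏ i ∈ t, w i

namespace esymmOn

variable {α : Type*} (w : α → ℝ) (s : Finset α)

@[simp] theorem zero : esymmOn w s 0 = 1 := by
  simp [esymmOn]

variable {w s}

theorem eq_zero_of_card_lt {k : ℕ} (h : #s < k) : esymmOn w s k = 0 := by
  simp [esymmOn, powersetCard_eq_empty.2 h]

theorem le_card_of_pos {k : ℕ} (h : 0 < esymmOn w s k) : k ≤ #s := by
  by_contra! hk
  exact h.ne' (eq_zero_of_card_lt hk)

theorem congr_of_eqOn {v : α → ℝ} (h : ∀ j ∈ s, v j = w j) (k : ℕ) :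
    esymmOn v s k = esymmOn w s k :=
  sum_congr rfl fun _ ht => prod_congr rfl fun j hj => h j ((mem_powersetCard.1 ht).1 hj)

variable [DecidableEq α]

theorem succ_of_mem {i : α} (hi : i ∈ s) (k : ℕ) :
    esymmOn w s (k + 1) = esymmOn w (s.erase i) (k + 1) + w i * esymmOn w (s.erase i) k := by
  have hi' : i ∉ s.erase i := notMem_erase i s
  rw [esymmOn, ← insert_erase hi, powersetCard_succ_insert hi', sum_union, sum_image,
    erase_insert hi', esymmOn, esymmOn, mul_sum]
  · congr 1
    refine sum_congr rfl fun t ht => prod_insert fun h => hi' ((mem_powersetCard.1 ht).1 h)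
  · intro t ht u hu htu
    simp only [mem_coe, mem_powersetCard] at ht hu
    rw [← erase_insert fun h => hi' (ht.1 h), ← erase_insert fun h => hi' (hu.1 h), htu]
  · refine disjoint_left.2 fun t ht ht' => ?_
    obtain ⟨u, -, rfl⟩ := mem_image.1 ht'
    exact hi' ((mem_powersetCard.1 ht).1 (mem_insert_self i u))

theorem update_succ_of_mem {i : α} (hi : i ∈ s) (a : ℝ) (k : ℕ) :
    esymmOn (Function.update w i a) s (k + 1) =
      esymmOn w s (k + 1) + (a - w i) * esymmOn w (s.erase i) k := by
  have hv : ∀ j ∈ s.erase i, Function.update w i a j = w j := fun j hj =>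
    Function.update_of_ne (ne_of_mem_erase hj) _ _
  rw [succ_of_mem hi, succ_of_mem hi, congr_of_eqOn hv, congr_of_eqOn hv, Function.update_self]
  ring

variable (w s)

theorem sum_erase (k : ℕ) :
    ∑ i ∈ s, esymmOn w (s.erase i) k = ((#s - k : ℕ) : ℝ) * esymmOn w s k := by
  -- each `k`-subset `t` of `s` is counted once for every `i ∈ s \ t`
  have h : ∀ i ∈ s, esymmOn w (s.erase i) k =
      ∑ t ∈ s.powersetCard k, if i ∉ t then ∏ j ∈ t, w j else 0 := by
    intro i _
    rw [esymmOn, ← sum_filter]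
    congr 1
    ext t
    simp only [mem_powersetCard, mem_filter, subset_erase]
    tauto
  rw [sum_congr rfl h, sum_comm, esymmOn, mul_sum]
  refine sum_congr rfl fun t ht => ?_
  obtain ⟨hts, htc⟩ := mem_powersetCard.1 ht
  rw [← sum_filter, sum_const, ← sdiff_eq_filter, card_sdiff_of_subset hts, htc, nsmul_eq_mul]

theorem sum_mul_erase (k : ℕ) :
    ∑ i ∈ s, w i * esymmOn w (s.erase i) k = ((k + 1 : ℕ) : ℝ) * esymmOn w s (k + 1) := by
  rcases le_or_gt (k + 1) #s with hk | hk
  · have h : ∀ i ∈ s, w i * esymmOn w (s.erase i) k =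
        esymmOn w s (k + 1) - esymmOn w (s.erase i) (k + 1) := fun i hi => by
      rw [succ_of_mem hi k]; ring
    rw [sum_congr rfl h, sum_sub_distrib, sum_const, sum_erase, nsmul_eq_mul, Nat.cast_sub hk]
    ring
  · have h : ∀ i ∈ s, w i * esymmOn w (s.erase i) k = 0 := fun i hi => by
      have := card_pos.2 ⟨i, hi⟩
      rw [eq_zero_of_card_lt (by rw [card_erase_of_mem hi]; omega), mul_zero]
    rw [sum_congr rfl h, sum_const_zero, eq_zero_of_card_lt hk, mul_zero]

end esymmOn

theorem coeff_iterate_derivative_prod_X_add_C {α : Type*} (w : α → ℝ) (s : Finset α) {k j : ℕ}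
    (hk : k ≤ #s) (hj : j ≤ k) :
    (derivative^[#s - k] (∏ i ∈ s, (X + C (w i)))).coeff (k - j) =
      ((#s - j).descFactorial (#s - k) : ℝ) * esymmOn w s j := by
  rw [coeff_iterate_derivative, nsmul_eq_mul, show k - j + (#s - k) = #s - j by omega,
    prod_X_add_C_coeff s w (by omega), show #s - (#s - j) = j by omega]
  rfl

def InGardingCone {α : Type*} (w : α → ℝ) (s : Finset α) (k : ℕ) : Prop :=
  ∀ j ≤ k, 0 < esymmOn w s j

theorem mem_gardingCone_iff {n k : ℕ} {lam : Fin n → ℝ} :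
    lam ∈ GardingCone n k ↔ InGardingCone lam univ k := by
  refine ⟨fun h j hj => ?_, fun h j _ hj => h j hj⟩
  rcases j.eq_zero_or_pos with rfl | hj₀
  · simp
  · exact h j hj₀ hj

namespace InGardingCone

variable {α : Type*} {w : α → ℝ} {s : Finset α} {k : ℕ}

theorem zero : InGardingCone w s 0 := fun j hj => by
  simp [Nat.le_zero.1 hj]

theorem mono (h : InGardingCone w s k) {j : ℕ} (hj : j ≤ k) : InGardingCone w s j :=
  fun l hl => h l (hl.trans hj)

theorem succ (h : InGardingCone w s k) (hk : 0 < esymmOn w s (k + 1)) :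
    InGardingCone w s (k + 1) :=
  fun j hj => (Nat.le_succ_iff.1 hj).elim (h j) fun e => e ▸ hk

theorem of_nonneg (hnonneg : ∀ j ≤ k, 0 ≤ esymmOn w s j) (hk : 0 < esymmOn w s k) :
    InGardingCone w s k := by
  have hks := esymmOn.le_card_of_pos hk
  set q := derivative^[#s - k] (∏ i ∈ s, (X + C (w i)))
  have hcoeff : ∀ j ≤ k,
      q.coeff (k - j) = ((#s - j).descFactorial (#s - k) : ℝ) * esymmOn w s j :=
    fun _ => coeff_iterate_derivative_prod_X_add_C w s hks
  have hfactor : ∀ j ≤ k, 0 < ((#s - j).descFactorial (#s - k) : ℝ) := fun j hj => by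
    exact_mod_cast Nat.descFactorial_pos.2 (by omega)
  have hqk : 0 < q.coeff k := by
    have h := hcoeff 0 (Nat.zero_le k)
    rw [Nat.sub_zero, esymmOn.zero, mul_one] at h
    exact h ▸ hfactor 0 (Nat.zero_le k)
  have hdeg : q.natDegree = k := by
    refine le_antisymm ((natDegree_iterate_derivative _ _).trans ?_)
      (le_natDegree_of_ne_zero hqk.ne')
    rw [natDegree_prod_of_monic _ _ fun i _ => monic_X_add_C (w i)]
    simp only [natDegree_X_add_C, sum_const, smul_eq_mul, mul_one]
    omega
  have hsplits : q.Splits :=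
    (Splits.prod fun i _ => Splits.X_add_C (w i)).iterate_derivative_of_real _
  have hqnonneg : ∀ r, 0 ≤ q.coeff r := by
    intro r
    rcases le_or_gt r k with hr | hr
    · rw [← Nat.sub_sub_self hr, hcoeff _ (Nat.sub_le k r)]
      exact mul_nonneg (hfactor _ (Nat.sub_le k r)).le (hnonneg _ (Nat.sub_le k r))
    · rw [coeff_eq_zero_of_natDegree_lt (hdeg ▸ hr)]
  have hq0 : 0 < q.coeff 0 := by
    rw [← Nat.sub_self k, hcoeff k le_rfl]
    exact mul_pos (hfactor k le_rfl) hk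
  intro j hj
  have h := coeff_pos_of_splits_of_coeff_nonneg hsplits hqnonneg hq0 (r := k - j) (by omega)
  rw [hcoeff j hj] at h
  exact pos_of_mul_pos_right h (hfactor j hj).le

variable [DecidableEq α]

theorem erase_of_nonpos (h : InGardingCone w s k) {i : α} (hi : i ∈ s) (hwi : w i ≤ 0) :
    InGardingCone w (s.erase i) k := by
  intro j hj
  induction j with
  | zero => simp
  | succ j ih =>
    have hσ := h (j + 1) hj
    rw [esymmOn.succ_of_mem hi] at hσ
    nlinarith [ih (by omega)]

theorem erase (h : InGardingCone w s (k + 1)) {i : α} (hi : i ∈ s) :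
    InGardingCone w (s.erase i) k := by
  induction k with
  | zero => exact zero
  | succ k ih =>
    have hk := ih (h.mono (Nat.le_succ _))
    refine hk.succ (lt_of_not_ge fun hneg => ?_)
    -- lower `w i` by the largest `t` keeping `σ_1, …, σ_{k+1}` nonnegative
    obtain ⟨j₀, hj₀, hmin⟩ := exists_min_image (range (k + 1))
      (fun j => esymmOn w s (j + 1) / esymmOn w (s.erase i) j) ⟨0, mem_range.2 k.succ_pos⟩
    set t := esymmOn w s (j₀ + 1) / esymmOn w (s.erase i) j₀
    have hj₀k : j₀ ≤ k := Nat.lt_succ_iff.1 (mem_range.1 hj₀)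
    have ht : 0 < t := div_pos (h _ (by omega)) (hk _ hj₀k)
    set v := Function.update w i (w i - t)
    have hv : ∀ j, esymmOn v s (j + 1) = esymmOn w s (j + 1) - t * esymmOn w (s.erase i) j :=
      fun j => by rw [esymmOn.update_succ_of_mem hi]; ring
    have hv_top : 0 < esymmOn v s (k + 2) := by
      rw [hv]
      nlinarith [h (k + 2) le_rfl]
    have hv_nonneg : ∀ j ≤ k + 2, 0 ≤ esymmOn v s j := by
      rintro (_ | j) hj
      · simp
      rcases (show j ≤ k ∨ j = k + 1 by omega) with hj | rfl
      · rw [hv, sub_nonneg, ← le_div_iff₀ (hk j hj)]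
        exact hmin j (mem_range.2 (by omega))
      · exact hv_top.le
    have hv_zero : esymmOn v s (j₀ + 1) = 0 := by
      rw [hv, div_mul_cancel₀ _ (hk _ hj₀k).ne', sub_self]
    exact (of_nonneg hv_nonneg hv_top (j₀ + 1) (by omega)).ne' hv_zero

theorem mul_neg_lt_of_nonpos (h : InGardingCone w s (k + 1)) {i : α} (hi : i ∈ s)
    (hwi : w i ≤ 0) {M : ℝ} (hM : ∀ l ∈ s, w l ≤ M) :
    (k + 1 : ℝ) * -w i < (#s - (k + 1) : ℝ) * M := by
  set μ := s.erase i
  have hμ : InGardingCone w μ (k + 1) := h.erase_of_nonpos hi hwi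
  have hσk : 0 < esymmOn w μ k := hμ k (Nat.le_succ k)
  have hexpand : -w i * esymmOn w μ k < esymmOn w μ (k + 1) := by
    have := h (k + 1) le_rfl
    rw [esymmOn.succ_of_mem hi] at this
    linarith
  have hcard : ((#μ - k : ℕ) : ℝ) = #s - (k + 1) := by
    have := esymmOn.le_card_of_pos (h (k + 1) le_rfl)
    rw [card_erase_of_mem hi, show #s - 1 - k = #s - (k + 1) by omega, Nat.cast_sub this]
    push_cast
    ring
  have hbound :
      (k + 1 : ℝ) * esymmOn w μ (k + 1) ≤ (#s - (k + 1) : ℝ) * M * esymmOn w μ k := by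
    calc (k + 1 : ℝ) * esymmOn w μ (k + 1) = ∑ l ∈ μ, w l * esymmOn w (μ.erase l) k := by
          rw [esymmOn.sum_mul_erase]
          push_cast
          ring
      _ ≤ ∑ l ∈ μ, M * esymmOn w (μ.erase l) k :=
          sum_le_sum fun l hl => mul_le_mul_of_nonneg_right (hM l (mem_of_mem_erase hl))
            (hμ.erase hl k le_rfl).le
      _ = (#s - (k + 1) : ℝ) * M * esymmOn w μ k := by
          rw [← mul_sum, esymmOn.sum_erase, hcard]
          ring
  refine lt_of_mul_lt_mul_right ?_ hσk.le
  calc (k + 1 : ℝ) * -w i * esymmOn w μ k = (k + 1 : ℝ) * (-w i * esymmOn w μ k) := by ring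
    _ < (k + 1 : ℝ) * esymmOn w μ (k + 1) := by gcongr
    _ ≤ _ := hbound

end InGardingCone

theorem stmt3 {n : ℕ} (k : ℕ) (hk : 1 ≤ k) (hkn : k ≤ n) (lam : Fin n → ℝ)
    (hG : lam ∈ GardingCone n k) (hsort : Antitone lam) (i : Fin n) (hi : lam i ≤ 0) :
    -lam i ≤ (((n : ℝ) - k) / k) * lam ⟨0, by omega⟩ := by
  obtain ⟨k, rfl⟩ : ∃ k', k = k' + 1 := ⟨k - 1, by omega⟩
  have hmax : ∀ l ∈ univ, lam l ≤ lam ⟨0, by omega⟩ := fun l _ => hsort (Nat.zero_le l.val)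
  have key := (mem_gardingCone_iff.1 hG).mul_neg_lt_of_nonpos (mem_univ i) hi hmax
  rw [card_univ, Fintype.card_fin] at key
  rw [div_mul_eq_mul_div, le_div_iff₀ (by positivity)]
  push_cast
  linarith
end

section
/- If λ = (λ_1, ..., λ_n) ∈ Γ_k with λ_1 ≥ ... ≥ λ_n, then for any 1 ≤ l < k there is a constant C(n, l) > 0 depending only on n and l such that σ_l(λ) ≥ C(n, l) · λ_1 λ_2 ··· λ_l. -/
/-!
Everything rests on the recursion `σ_j(μ, a) = σ_j(μ) + a σ_{j-1}(μ)`. Removing the smallest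
entry keeps `σ_1, …, σ_k` positive (if that entry is `≤ 0`, the recursion shows that the lower
`σ_j` only grow), so every initial segment `λ_1, …, λ_m` has `σ_j > 0` for `j ≤ min(m, k)`;
for `m = k` this forces `λ_1, …, λ_k > 0`, whence `σ_l(λ_1, …, λ_k) ≥ λ_1 ⋯ λ_l`. Adding the
entries `a = λ_{m+1}` one at a time then multiplies `σ_l` by at least
`1 - l(m-l)/((l+1)(m-l+1))`: when `a < 0`, positivity of `σ_{l+1}` gives `-a σ_l < σ_{l+1}`, and
Newton's inequality `(l+1)(m-l+1) σ_{l-1} σ_{l+1} ≤ l(m-l) σ_l²` bounds the loss.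
Newton's inequality is reduced, by differentiating `∏ (X + λ_i)` down to degree `l + 1` (Rolle
keeps all roots real), to its case for the three lowest coefficients, which is Cauchy–Schwarz
for the products `∏_{j ≠ i} μ_j` over the roots `-μ_i`.
-/

open Finset

noncomputable def esymOn {ι R : Type*} [CommSemiring R] (f : ι → R) (s : Finset ι) (j : ℕ) : R :=
  ∑ t ∈ s.powersetCard j, ∏ i ∈ t, f i

section Algebra

variable {ι R : Type*} [CommRing R] (f : ι → R) (s : Finset ι)

@[simp]
lemma esymOn_zero : esymOn f s 0 = 1 := by
  simp [esymOn]

lemma esymOn_eq_zero_of_card_lt {j : ℕ} (h : s.card < j) : esymOn f s j = 0 := by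
  simp [esymOn, powersetCard_eq_empty.2 h]

lemma esymOn_card : esymOn f s s.card = ∏ i ∈ s, f i := by
  rw [esymOn, powersetCard_self, sum_singleton]

lemma esymOn_one : esymOn f s 1 = ∑ i ∈ s, f i := by
  simp [esymOn, powersetCard_one]

lemma esymOn_insert [DecidableEq ι] {a : ι} (ha : a ∉ s) (j : ℕ) :
    esymOn f (insert a s) (j + 1) = esymOn f s (j + 1) + f a * esymOn f s j := by
  simp only [esymOn, ← Finset.esymm_map_val, Finset.insert_val_of_notMem ha, Multiset.map_cons,
    Multiset.esymm, Multiset.powersetCard_cons, Multiset.map_add, Multiset.sum_add,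
    Multiset.map_map, Function.comp_def, Multiset.prod_cons, Multiset.sum_map_mul_left]

lemma esymOn_card_sub [DecidableEq ι] {j : ℕ} (hj : j ≤ s.card) :
    esymOn f s (s.card - j) = ∑ t ∈ s.powersetCard j, ∏ i ∈ s \ t, f i := by
  refine sum_nbij' (s \ ·) (s \ ·) ?_ ?_ ?_ ?_ ?_ <;> intro t ht <;>
    simp only [mem_powersetCard] at ht ⊢
  · exact ⟨sdiff_subset, by rw [card_sdiff_of_subset ht.1, ht.2]; omega⟩
  · exact ⟨sdiff_subset, by rw [card_sdiff_of_subset ht.1, ht.2]⟩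
  · exact Finset.sdiff_sdiff_eq_self ht.1
  · exact Finset.sdiff_sdiff_eq_self ht.1
  · rw [Finset.sdiff_sdiff_eq_self ht.1]

lemma esymOn_card_sub_one [DecidableEq ι] (hs : s.Nonempty) :
    esymOn f s (s.card - 1) = ∑ i ∈ s, ∏ x ∈ s.erase i, f x := by
  rw [esymOn_card_sub f s hs.card_pos, powersetCard_one, sum_map]
  simp [sdiff_singleton_eq_erase]

lemma two_mul_esymOn_two_add_sum_sq :
    2 * esymOn f s 2 + ∑ i ∈ s, f i ^ 2 = (∑ i ∈ s, f i) ^ 2 := by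
  classical
  induction s using Finset.induction_on with
  | empty => simp [esymOn_eq_zero_of_card_lt f ∅ (by simp : (∅ : Finset ι).card < 2)]
  | insert a s ha ih =>
    rw [esymOn_insert f s ha, esymOn_one, sum_insert ha, sum_insert ha]
    linear_combination ih

lemma prod_sdiff_mul_prod_eq_prod_prod_erase [DecidableEq ι] {t : Finset ι} (hts : t ⊆ s)
    (ht : t.card = 2) :
    (∏ i ∈ s \ t, f i) * ∏ i ∈ s, f i = ∏ i ∈ t, ∏ x ∈ s.erase i, f x := by
  obtain ⟨a, b, hab, rfl⟩ := card_eq_two.1 ht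
  have has : a ∈ s := hts (by simp)
  have hbs : b ∈ s := hts (by simp)
  rw [prod_pair hab, sdiff_insert, sdiff_singleton_eq_erase, ← mul_prod_erase s f has,
    ← mul_prod_erase (s.erase a) f (mem_erase.2 ⟨Ne.symm hab, hbs⟩),
    ← mul_prod_erase (s.erase b) f (mem_erase.2 ⟨hab, has⟩), erase_right_comm]
  ring

end Algebra

theorem esymOn_newton_top {ι : Type*} (f : ι → ℝ) (s : Finset ι) {r : ℕ} (hs : s.card = r + 2) :
    2 * ((r : ℝ) + 2) * (esymOn f s r * esymOn f s (r + 2)) ≤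
      ((r : ℝ) + 1) * esymOn f s (r + 1) ^ 2 := by
  classical
  set P : ι → ℝ := fun i => ∏ x ∈ s.erase i, f x
  have hne : s.Nonempty := card_pos.1 (by omega)
  have hsum : esymOn f s (r + 1) = ∑ i ∈ s, P i := by
    rw [← esymOn_card_sub_one f s hne, hs]; rfl
  have hpairs : esymOn f s r * esymOn f s (r + 2) = esymOn P s 2 := by
    rw [← hs, show r = s.card - 2 by omega, esymOn_card_sub f s (by omega), esymOn_card, sum_mul]
    refine sum_congr rfl fun t ht => ?_
    rw [mem_powersetCard] at ht
    exact prod_sdiff_mul_prod_eq_prod_prod_erase f s ht.1 ht.2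
  have hCS : (∑ i ∈ s, P i) ^ 2 ≤ ((r : ℝ) + 2) * ∑ i ∈ s, P i ^ 2 := by
    have := sq_sum_le_card_mul_sum_sq (s := s) (f := P)
    rwa [hs, Nat.cast_add, Nat.cast_two] at this
  rw [hsum, hpairs]
  linear_combination ((r : ℝ) + 2) * two_mul_esymOn_two_add_sum_sq P s + hCS

namespace Polynomial

lemma card_roots_le_card_roots_iterate_derivative (p : ℝ[X]) (k : ℕ) :
    Multiset.card p.roots ≤ Multiset.card (derivative^[k] p).roots + k := by
  induction k with
  | zero => simp
  | succ k ih =>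
    have := card_roots_le_derivative (derivative^[k] p)
    rw [Function.iterate_succ_apply']
    omega

lemma card_roots_iterate_derivative_of_card_roots_eq {p : ℝ[X]}
    (hp : Multiset.card p.roots = p.natDegree) (k : ℕ) :
    Multiset.card (derivative^[k] p).roots = p.natDegree - k ∧
      (derivative^[k] p).natDegree = p.natDegree - k := by
  have h1 := card_roots_le_card_roots_iterate_derivative p k
  have h2 := card_roots' (derivative^[k] p)
  have h3 := natDegree_iterate_derivative p k
  omega

theorem newton_coeff_zero {p : ℝ[X]} (hp : Multiset.card p.roots = p.natDegree) {r : ℕ}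
    (hdeg : p.natDegree = r + 2) :
    2 * ((r : ℝ) + 2) * (p.coeff 0 * p.coeff 2) ≤ ((r : ℝ) + 1) * p.coeff 1 ^ 2 := by
  set b := p.leadingCoeff
  set g : p.roots → ℝ := fun x => -(x : ℝ)
  have hfactor : p = C b * ∏ x : p.roots, (X + C (g x)) := by
    conv_lhs => rw [← C_leadingCoeff_mul_prod_multiset_X_sub_C hp]
    rw [prod_eq_multiset_prod, Multiset.map_univ p.roots (fun a => X + C (-a))]
    simp only [map_neg, ← sub_eq_add_neg, b]
  have hcard : (univ : Finset p.roots).card = r + 2 := by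
    rw [card_univ, Multiset.card_coe, hp, hdeg]
  have hcoeff (t : ℕ) (ht : t ≤ r + 2) : p.coeff t = b * esymOn g univ (r + 2 - t) := by
    conv_lhs => rw [hfactor]
    rw [coeff_C_mul, prod_X_add_C_coeff _ _ (by omega), hcard]
    rfl
  rw [hcoeff 0 (by omega), hcoeff 1 (by omega), hcoeff 2 (by omega), Nat.sub_zero,
    show r + 2 - 1 = r + 1 by omega, Nat.add_sub_cancel]
  have := esymOn_newton_top g univ hcard
  calc 2 * ((r : ℝ) + 2) * (b * esymOn g univ (r + 2) * (b * esymOn g univ r))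
      = b ^ 2 * (2 * ((r : ℝ) + 2) * (esymOn g univ r * esymOn g univ (r + 2))) := by ring
    _ ≤ b ^ 2 * (((r : ℝ) + 1) * esymOn g univ (r + 1) ^ 2) := by gcongr
    _ = ((r : ℝ) + 1) * (b * esymOn g univ (r + 1)) ^ 2 := by ring

theorem newton_coeff {p : ℝ[X]} (hp : Multiset.card p.roots = p.natDegree) {u r : ℕ}
    (hdeg : p.natDegree = u + r + 2) :
    ((u : ℝ) + 2) * ((r : ℝ) + 2) * (p.coeff u * p.coeff (u + 2)) ≤
      ((u : ℝ) + 1) * ((r : ℝ) + 1) * p.coeff (u + 1) ^ 2 := by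
  obtain ⟨hroots, hdeg'⟩ := card_roots_iterate_derivative_of_card_roots_eq hp u
  have hG := newton_coeff_zero (hroots.trans hdeg'.symm) (r := r) (by omega)
  simp only [coeff_iterate_derivative, nsmul_eq_mul, add_comm _ u] at hG
  set d := ((u.descFactorial u : ℕ) : ℝ)
  have hd : 0 < d := by simp only [d, Nat.descFactorial_self]; positivity
  have hd1 : (((u + 1).descFactorial u : ℕ) : ℝ) = (u + 1) * d := by
    have := Nat.succ_descFactorial u u
    rw [Nat.add_sub_cancel_left, one_mul] at this
    rw [this]; push_cast; ring
  have hd2 : (((u + 2).descFactorial u : ℕ) : ℝ) = (u + 2) * (u + 1) * d / 2 := by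
    have := Nat.succ_descFactorial (u + 1) u
    rw [show u + 1 + 1 - u = 2 by omega, show u + 1 + 1 = u + 2 by omega] at this
    rw [eq_div_iff two_ne_zero, mul_assoc, ← hd1, mul_comm]
    exact_mod_cast this
  rw [hd1, hd2] at hG
  have hpos : 0 < ((u : ℝ) + 1) * d ^ 2 := by positivity
  refine le_of_mul_le_mul_right ?_ hpos
  linear_combination hG

end Polynomial

section Real

open Polynomial

variable {ι : Type*}

theorem esymOn_newton (f : ι → ℝ) (s : Finset ι) {j r : ℕ} (hs : s.card = j + r + 2) :
    ((j : ℝ) + 2) * ((r : ℝ) + 2) * (esymOn f s j * esymOn f s (j + 2)) ≤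
      ((j : ℝ) + 1) * ((r : ℝ) + 1) * esymOn f s (j + 1) ^ 2 := by
  set F : ℝ[X] := ((s.val.map fun i => -f i).map fun a => X - C a).prod
  have hF : F = ∏ i ∈ s, (X + C (f i)) := by
    simp only [F, Multiset.map_map, Function.comp_def, map_neg, sub_neg_eq_add]
    rfl
  have hdeg : F.natDegree = r + j + 2 := by
    rw [natDegree_multiset_prod_X_sub_C_eq_card, Multiset.card_map, ← card_def, hs]; ring
  have hroots : Multiset.card F.roots = F.natDegree := by
    rw [roots_multiset_prod_X_sub_C, Multiset.card_map, ← card_def, hdeg, hs]; ring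
  have hcoeff (t : ℕ) (ht : t ≤ r + 2) : F.coeff t = esymOn f s (j + r + 2 - t) := by
    rw [hF, prod_X_add_C_coeff _ _ (by omega), hs]; rfl
  have := newton_coeff hroots hdeg
  rw [hcoeff r (by omega), hcoeff (r + 1) (by omega), hcoeff (r + 2) le_rfl,
    show j + r + 2 - r = j + 2 by omega, show j + r + 2 - (r + 1) = j + 1 by omega,
    show j + r + 2 - (r + 2) = j by omega] at this
  linear_combination this

lemma esymOn_pos {f : ι → ℝ} {s : Finset ι} (hf : ∀ i ∈ s, 0 < f i) {j : ℕ}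
    (hj : j ≤ s.card) : 0 < esymOn f s j :=
  sum_pos (fun _ ht => prod_pos fun i hi => hf i ((mem_powersetCard.1 ht).1 hi))
    (powersetCard_nonempty.2 hj)

lemma prod_le_esymOn {f : ι → ℝ} {s t : Finset ι} (hf : ∀ i ∈ s, 0 ≤ f i) (hts : t ⊆ s) :
    ∏ i ∈ t, f i ≤ esymOn f s t.card :=
  single_le_sum (f := fun u => ∏ i ∈ u, f i)
    (fun _ hu => prod_nonneg fun i hi => hf i ((mem_powersetCard.1 hu).1 hi))
    (mem_powersetCard.2 ⟨hts, rfl⟩)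

lemma esymOn_pos_of_insert_of_nonpos [DecidableEq ι] {f : ι → ℝ} {s : Finset ι} {a : ι}
    (ha : a ∉ s) (hfa : f a ≤ 0) (j : ℕ) (h : ∀ i ≤ j, 0 < esymOn f (insert a s) i) :
    0 < esymOn f s j := by
  induction j with
  | zero => simp
  | succ j ih =>
    have hj := ih fun i hi => h i (by omega)
    have := h (j + 1) le_rfl
    rw [esymOn_insert f s ha] at this
    nlinarith

-- `1 - l (m - l) / ((l + 1) (m - l + 1))`, the complement of the constant in Newton's inequality
noncomputable def growthFactor (l m : ℕ) : ℝ := ((m : ℝ) + 1) / ((l + 1) * (m + 1 - l))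

lemma growthFactor_pos {l m : ℕ} (h : l ≤ m) : 0 < growthFactor l m := by
  have : (l : ℝ) ≤ m := by exact_mod_cast h
  unfold growthFactor
  apply div_pos <;> nlinarith

lemma growthFactor_mul_esymOn_le [DecidableEq ι] {f : ι → ℝ} {s : Finset ι} {a : ι}
    (ha : a ∉ s) {l : ℕ} (hl : 1 ≤ l) (hls : l < s.card) (hprev : 0 ≤ esymOn f s (l - 1))
    (hcur : 0 < esymOn f s l) (hnext : 0 < esymOn f (insert a s) (l + 1)) :
    growthFactor l s.card * esymOn f s l ≤ esymOn f (insert a s) l := by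
  obtain ⟨j, rfl⟩ : ∃ j, l = j + 1 := ⟨l - 1, by omega⟩
  obtain ⟨r, hr⟩ : ∃ r, s.card = j + r + 2 := ⟨s.card - j - 2, by omega⟩
  rw [Nat.add_sub_cancel] at hprev
  rw [esymOn_insert f s ha] at hnext ⊢
  have hK : (0 : ℝ) < (j + 2) * (r + 2) := by positivity
  have hc : growthFactor (j + 1) s.card = ((j : ℝ) + r + 3) / ((j + 2) * (r + 2)) := by
    rw [growthFactor, hr]; push_cast; congr 1 <;> ring
  rw [hc, div_mul_eq_mul_div, div_le_iff₀ hK]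
  rcases le_or_gt 0 (f a) with hfa | hfa
  · nlinarith [mul_nonneg hK.le (mul_nonneg hfa hprev),
      mul_nonneg (by positivity : (0 : ℝ) ≤ (j + 1) * (r + 1)) hcur.le]
  · have hN := esymOn_newton f s hr
    have h1 : -f a * esymOn f s (j + 1) ≤ esymOn f s (j + 2) := by linarith
    have h2 : (j + 2) * (r + 2) * (-f a * esymOn f s j) * esymOn f s (j + 1) ≤
        (j + 1) * (r + 1) * esymOn f s (j + 1) * esymOn f s (j + 1) := by
      nlinarith [mul_le_mul_of_nonneg_left h1 hprev]
    have h3 := le_of_mul_le_mul_right h2 hcur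
    nlinarith

end Real

section Cone

variable {ι : Type*} [DecidableEq ι] {f : ι → ℝ} {s : Finset ι} {k : ℕ}

-- `f|s ∈ Γ_k`; the `σ_j` with `j > #s` vanish and are not asked to be positive
def GardingOn (f : ι → ℝ) (s : Finset ι) (k : ℕ) : Prop :=
  ∀ j ≤ k, j ≤ s.card → 0 < esymOn f s j

lemma GardingOn.pos_of_card_le (h : GardingOn f s k) (hk : s.card ≤ k) {i : ι} (hi : i ∈ s) :
    0 < f i := by
  by_contra! hfi
  have hs : insert i (s.erase i) = s := insert_erase hi
  have hcard : (s.erase i).card + 1 = s.card := card_erase_add_one hi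
  have hpos := esymOn_pos_of_insert_of_nonpos (notMem_erase i s) hfi ((s.erase i).card + 1)
    fun j hj => by rw [hs]; exact h j (by omega) (by omega)
  rw [esymOn_eq_zero_of_card_lt f _ (Nat.lt_succ_self _)] at hpos
  exact hpos.false

lemma GardingOn.of_insert_of_forall_le {a : ι} (ha : a ∉ s) (hmin : ∀ i ∈ s, f a ≤ f i)
    (h : GardingOn f (insert a s) k) : GardingOn f s k := by
  intro j hjk hjs
  rcases le_or_gt (f a) 0 with hfa | hfa
  · refine esymOn_pos_of_insert_of_nonpos ha hfa j fun i hi => h i (by omega) ?_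
    rw [card_insert_of_notMem ha]
    omega
  · exact esymOn_pos (fun i hi => hfa.trans_le (hmin i hi)) hjs

end Cone

def finPrefix (n m : ℕ) : Finset (Fin n) := univ.filter fun i : Fin n => (i : ℕ) < m

lemma finPrefix_self (n : ℕ) : finPrefix n n = univ := by
  ext i
  simp [finPrefix]

lemma card_finPrefix {n m : ℕ} (h : m ≤ n) : (finPrefix n m).card = m := by
  rw [finPrefix, Fin.card_filter_val_lt, min_eq_right h]

lemma finPrefix_mono {n m m' : ℕ} (h : m ≤ m') : finPrefix n m ⊆ finPrefix n m' :=
  fun i hi => by simp only [finPrefix, mem_filter, mem_univ, true_and] at hi ⊢; omega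

lemma notMem_finPrefix_self {n m : ℕ} (hm : m < n) : (⟨m, hm⟩ : Fin n) ∉ finPrefix n m := by
  simp [finPrefix]

lemma finPrefix_succ {n m : ℕ} (hm : m < n) :
    finPrefix n (m + 1) = insert ⟨m, hm⟩ (finPrefix n m) := by
  ext i
  simp only [finPrefix, mem_insert, mem_filter, mem_univ, true_and, Fin.ext_iff]
  omega

section GardingCone

variable {n k : ℕ} {lam : Fin n → ℝ}

lemma gardingOn_finPrefix (hcone : lam ∈ GardingCone n k) (hanti : Antitone lam) {m : ℕ}
    (hm : m ≤ n) : GardingOn lam (finPrefix n m) k := by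
  induction hm using Nat.decreasingInduction with
  | self =>
    intro j hjk _
    rcases Nat.eq_zero_or_pos j with rfl | hj
    · simp
    · rw [finPrefix_self]
      exact hcone j hj hjk
  | of_succ m hm ih =>
    rw [finPrefix_succ hm] at ih
    refine ih.of_insert_of_forall_le (notMem_finPrefix_self hm) fun i hi => hanti ?_
    simp only [finPrefix, mem_filter] at hi
    exact Fin.mk_le_of_le_val hi.2.le

lemma pos_of_lt_of_mem_gardingCone (hcone : lam ∈ GardingCone n k) (hanti : Antitone lam)
    (hkn : k ≤ n) {i : Fin n} (hi : (i : ℕ) < k) : 0 < lam i :=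
  (gardingOn_finPrefix hcone hanti hkn).pos_of_card_le (card_finPrefix hkn).le
    (by simp [finPrefix, hi])

lemma growthFactor_prod_mul_le_esymOn_finPrefix {l : ℕ} (hl : 1 ≤ l) (hlk : l < k)
    (hcone : lam ∈ GardingCone n k) (hanti : Antitone lam) {m : ℕ} (hkm : k ≤ m)
    (hmn : m ≤ n) :
    (∏ x ∈ Ico k m, growthFactor l x) * ∏ i ∈ finPrefix n l, lam i ≤
      esymOn lam (finPrefix n m) l := by
  induction m, hkm using Nat.le_induction with
  | base =>
    rw [Ico_self, prod_empty, one_mul]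
    have := prod_le_esymOn (fun i hi => (pos_of_lt_of_mem_gardingCone hcone hanti hmn
      (by simpa [finPrefix] using hi)).le) (finPrefix_mono (n := n) hlk.le)
    rwa [card_finPrefix (by omega)] at this
  | succ m hkm ih =>
    have hm : m < n := by omega
    have hcard := card_finPrefix hm.le
    have hS := gardingOn_finPrefix hcone hanti hm.le
    have hS' := gardingOn_finPrefix hcone hanti hm
    rw [finPrefix_succ hm] at hS' ⊢
    have hstep := growthFactor_mul_esymOn_le (notMem_finPrefix_self hm) hl (by omega)
      (hS (l - 1) (by omega) (by omega)).le (hS l hlk.le (by omega))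
      (hS' (l + 1) hlk (by rw [card_insert_of_notMem (notMem_finPrefix_self hm)]; omega))
    rw [hcard] at hstep
    rw [prod_Ico_succ_top hkm, mul_right_comm]
    calc _ ≤ growthFactor l m * esymOn lam (finPrefix n m) l := by
          rw [mul_comm]
          gcongr
          · exact (growthFactor_pos (by omega)).le
          · exact ih hm.le
      _ ≤ _ := hstep

end GardingCone

theorem stmt4 {n : ℕ} (k l : ℕ) (hl : 1 ≤ l) (hlk : l < k) (hkn : k ≤ n) :
    ∃ C : ℝ, 0 < C ∧ ∀ lam : Fin n → ℝ, lam ∈ GardingCone n k → Antitone lam →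
      esym l lam ≥ C * ∏ i ∈ Finset.univ.filter (fun i : Fin n => (i : ℕ) < l), lam i := by
  refine ⟨∏ m ∈ Ico k n, growthFactor l m,
    prod_pos fun m hm => growthFactor_pos (by simp at hm; omega), fun lam hcone hanti => ?_⟩
  have h := growthFactor_prod_mul_le_esymOn_finPrefix hl hlk hcone hanti hkn le_rfl
  rwa [finPrefix_self] at h
end

section
/- Generalized Newton–MacLaurin inequality: for λ ∈ Γ_m and integers m > l ≥ 0, r > s ≥ 0 with m ≥ r and l ≥ s, one has [ (σ_m(λ)/C(n,m)) / (σ_l(λ)/C(n,l)) ]^{1/(m-l)} ≤ [ (σ_r(λ)/C(n,r)) / (σ_s(λ)/C(n,s)) ]^{1/(r-s)}. -/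
open Finset

/-!
Newton's inequalities `E_j E_{j+2} ≤ E_{j+1}²` hold for the normalized elementary symmetric means
`E_k = σ_k / C(n, k)` of any real numbers. Differentiating `∏ (X - λᵢ)` keeps it real-rooted (Rolle)
and keeps `E_0, …, E_{n-1}`, which reduces them to `n = j + 2`; inverting the `λᵢ` turns that case
into `j = 0`, which reduces in the same way to two numbers, where it is AM-GM.

On `Γ_m` the means `E_0, …, E_m` are positive, so Newton's inequalities say that `k ↦ log E_k` is
concave on `[0, m]`. The claim compares the slopes of its chords over `[l, m]` and `[s, r]`:
these are averages of the non-increasing increments `log E_{k+1} - log E_k` over two windows,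
the first one lying further to the right.
-/

namespace Multiset

open Polynomial

section CommSemiring

variable {R : Type*} [CommSemiring R]

@[simp]
lemma esymm_zero (t : Multiset R) : t.esymm 0 = 1 := by
  simp [esymm]

lemma esymm_card (t : Multiset R) : t.esymm (card t) = t.prod := by
  simp [esymm, powersetCard_self]

lemma esymm_cons_add_one (a : R) (t : Multiset R) (k : ℕ) :
    (a ::ₘ t).esymm (k + 1) = t.esymm (k + 1) + a * t.esymm k := by
  simp [esymm, powersetCard_cons, sum_map_mul_left]

end CommSemiring

lemma esymm_eq_prod_mul_esymm_inv {K : Type*} [Field K] {t : Multiset K} (h0 : (0 : K) ∉ t)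
    {i k : ℕ} (hik : i + k = card t) : t.esymm k = t.prod * (t.map (·⁻¹)).esymm i := by
  induction t using Multiset.induction generalizing i k with
  | empty =>
    obtain ⟨rfl, rfl⟩ : i = 0 ∧ k = 0 := by simpa using hik
    simp
  | cons a t ih =>
    have ha : a ≠ 0 := fun h => h0 (h ▸ mem_cons_self a t)
    have h0' : (0 : K) ∉ t := fun h => h0 (mem_cons_of_mem h)
    rw [card_cons] at hik
    rcases k with _ | k
    · rw [esymm_zero, show i = card ((a ::ₘ t).map (·⁻¹)) by simpa using hik, esymm_card,
        prod_map_inv, map_id', mul_inv_cancel₀ (prod_ne_zero h0)]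
    rcases i with _ | i
    · rw [esymm_zero, mul_one, show k + 1 = card (a ::ₘ t) by rw [card_cons]; omega, esymm_card]
    rw [esymm_cons_add_one, map_cons, esymm_cons_add_one, prod_cons,
      ih h0' (i := i) (k := k + 1) (by omega), ih h0' (i := i + 1) (k := k) (by omega)]
    field_simp
    ring

noncomputable def esymmMean (t : Multiset ℝ) (k : ℕ) : ℝ :=
  t.esymm k / (card t).choose k

lemma esymmMean_eq_prod_mul_esymmMean_inv {t : Multiset ℝ} (h0 : (0 : ℝ) ∉ t) {i k : ℕ}
    (hik : i + k = card t) : t.esymmMean k = t.prod * (t.map (·⁻¹)).esymmMean i := by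
  rw [esymmMean, esymmMean, esymm_eq_prod_mul_esymm_inv h0 hik, card_map,
    Nat.choose_symm_of_eq_add hik.symm, mul_div_assoc]

lemma exists_esymmMean_eq_of_card_eq_add_one {t : Multiset ℝ} {n : ℕ} (ht : card t = n + 1) :
    ∃ u : Multiset ℝ, card u = n ∧ ∀ k ≤ n, u.esymmMean k = t.esymmMean k := by
  set p : ℝ[X] := (t.map fun a => X - C a).prod
  have hp : p.natDegree = n + 1 := by rw [natDegree_multiset_prod_X_sub_C_eq_card, ht]
  have hq : (derivative p).natDegree = n := by rw [natDegree_derivative, hp, Nat.add_sub_cancel]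
  have hsplit : (derivative p).Splits := by
    rw [splits_iff_card_roots]
    refine le_antisymm (card_roots' _) ?_
    have := card_roots_le_derivative p
    rw [roots_multiset_prod_X_sub_C, ht] at this
    omega
  have hlead : (derivative p).leadingCoeff = n + 1 := by
    have hmonic : p.Monic := monic_multiset_prod_of_monic t _ fun a _ => monic_X_sub_C a
    rw [leadingCoeff, hq, coeff_derivative,
      show p.coeff (n + 1) = 1 from hp ▸ hmonic.coeff_natDegree]
    ring
  set u := (derivative p).roots
  have hu : card u = n := hsplit.natDegree_eq_card_roots ▸ hq
  -- Vieta for `p` and for `p'`, compared at the coefficient of `X ^ (n - k)` of `p'`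
  have hvieta : ∀ k ≤ n, ((n : ℝ) + 1) * u.esymm k = ((n : ℝ) + 1 - k) * t.esymm k := by
    intro k hk
    have hp' := coeff_eq_esymm_roots_of_splits hsplit (k := n - k) (by omega)
    have hpk := prod_X_sub_C_coeff t (k := n - k + 1) (by omega)
    rw [coeff_derivative, hpk, hlead, hq, ht, show n + 1 - (n - k + 1) = k by omega,
      show n - (n - k) = k by omega, Nat.cast_sub hk] at hp'
    have hsign : ((-1 : ℝ) ^ k) ^ 2 = 1 := by rw [← pow_mul, mul_comm, pow_mul]; norm_num
    linear_combination (-(-1 : ℝ) ^ k) * hp'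
      - (((n : ℝ) + 1) * u.esymm k - ((n : ℝ) + 1 - k) * t.esymm k) * hsign
  refine ⟨u, hu, fun k hk => ?_⟩
  have hchoose :
      ((n.choose k : ℕ) : ℝ) * (n + 1) = ((n + 1).choose k : ℕ) * ((n : ℝ) + 1 - k) := by
    have h := congrArg (Nat.cast (R := ℝ)) (Nat.choose_mul_succ_eq n k)
    push_cast [Nat.cast_sub (show k ≤ n + 1 by omega)] at h
    exact h
  have hpos : (0 : ℝ) < n.choose k := by exact_mod_cast Nat.choose_pos hk
  have hpos' : (0 : ℝ) < (n + 1).choose k := by exact_mod_cast Nat.choose_pos (by omega)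
  rw [esymmMean, esymmMean, hu, ht, div_eq_div_iff hpos.ne' hpos'.ne']
  refine mul_right_cancel₀ (show (n : ℝ) + 1 ≠ 0 by positivity) ?_
  linear_combination ((n + 1).choose k : ℝ) * hvieta k hk - t.esymm k * hchoose

lemma esymmMean_mul_le_sq_of_forall_card_eq {j : ℕ}
    (h : ∀ t : Multiset ℝ, card t = j + 2 →
      t.esymmMean j * t.esymmMean (j + 2) ≤ t.esymmMean (j + 1) ^ 2)
    {t : Multiset ℝ} (ht : j + 2 ≤ card t) :
    t.esymmMean j * t.esymmMean (j + 2) ≤ t.esymmMean (j + 1) ^ 2 := by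
  obtain ⟨n, hn⟩ := Nat.exists_eq_add_of_le ht
  induction n generalizing t with
  | zero => exact h t hn
  | succ n ih =>
    obtain ⟨u, hu, hmean⟩ := exists_esymmMean_eq_of_card_eq_add_one (n := j + 2 + n) hn
    rw [← hmean j (by omega), ← hmean (j + 1) (by omega), ← hmean (j + 2) (by omega)]
    exact ih (by omega) hu

lemma esymmMean_zero_mul_esymmMean_two_le_sq {t : Multiset ℝ} (ht : 2 ≤ card t) :
    t.esymmMean 0 * t.esymmMean 2 ≤ t.esymmMean 1 ^ 2 := by
  refine esymmMean_mul_le_sq_of_forall_card_eq (fun t ht => ?_) ht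
  obtain ⟨x, y, rfl⟩ := card_eq_two.mp ht
  have hamgm : x * y ≤ ((x + y) / 2) ^ 2 := by nlinarith [sq_nonneg (x - y)]
  simpa [esymmMean] using hamgm

lemma esymmMean_mul_le_sq_of_card_eq {t : Multiset ℝ} {j : ℕ} (ht : card t = j + 2) :
    t.esymmMean j * t.esymmMean (j + 2) ≤ t.esymmMean (j + 1) ^ 2 := by
  by_cases h0 : (0 : ℝ) ∈ t
  · have htop : t.esymmMean (j + 2) = 0 := by
      rw [esymmMean, ← ht, esymm_card, prod_eq_zero h0, zero_div]
    rw [htop, mul_zero]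
    positivity
  set s := t.map (·⁻¹)
  rw [esymmMean_eq_prod_mul_esymmMean_inv h0 (i := 2) (k := j) (by omega),
    esymmMean_eq_prod_mul_esymmMean_inv h0 (i := 0) (k := j + 2) (by omega),
    esymmMean_eq_prod_mul_esymmMean_inv h0 (i := 1) (k := j + 1) (by omega)]
  calc t.prod * s.esymmMean 2 * (t.prod * s.esymmMean 0)
      = t.prod ^ 2 * (s.esymmMean 0 * s.esymmMean 2) := by ring
    _ ≤ t.prod ^ 2 * s.esymmMean 1 ^ 2 :=
        mul_le_mul_of_nonneg_left (esymmMean_zero_mul_esymmMean_two_le_sq (by simp [s, ht]))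
          (sq_nonneg _)
    _ = (t.prod * s.esymmMean 1) ^ 2 := by ring

theorem esymmMean_mul_esymmMean_le_sq (t : Multiset ℝ) (j : ℕ) :
    t.esymmMean j * t.esymmMean (j + 2) ≤ t.esymmMean (j + 1) ^ 2 := by
  by_cases ht : j + 2 ≤ card t
  · exact esymmMean_mul_le_sq_of_forall_card_eq (fun _ => esymmMean_mul_le_sq_of_card_eq) ht
  · have htop : t.esymmMean (j + 2) = 0 := by
      rw [esymmMean, Nat.choose_eq_zero_of_lt (by omega), Nat.cast_zero, div_zero]
    rw [htop, mul_zero]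
    positivity

end Multiset

section WindowAverage

variable {d : ℕ → ℝ} {m : ℕ}

lemma sub_mul_sum_Ico_le_sub_mul_sum_Ico (hd : AntitoneOn d (Set.Iio m)) {a b c : ℕ}
    (hab : a ≤ b) (hbc : b ≤ c) (hcm : c ≤ m) :
    ((b : ℝ) - a) * ∑ i ∈ Ico b c, d i ≤ ((c : ℝ) - b) * ∑ i ∈ Ico a b, d i := by
  rcases hbc.eq_or_lt with rfl | hbc
  · simp
  have hb : b ∈ Set.Iio m := Set.mem_Iio.mpr (by omega)
  have upper : ∑ i ∈ Ico b c, d i ≤ ((c : ℝ) - b) * d b := by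
    have := sum_le_card_nsmul (Ico b c) d (d b) fun i hi => by
      simp only [mem_Ico] at hi
      exact hd hb (Set.mem_Iio.mpr (by omega)) hi.1
    simpa [Nat.cast_sub hbc.le] using this
  have lower : ((b : ℝ) - a) * d b ≤ ∑ i ∈ Ico a b, d i := by
    have := card_nsmul_le_sum (Ico a b) d (d b) fun i hi => by
      simp only [mem_Ico] at hi
      exact hd (Set.mem_Iio.mpr (by omega)) hb hi.2.le
    simpa [Nat.cast_sub hab] using this
  have hba : (0 : ℝ) ≤ b - a := by simp [hab]
  have hcb : (0 : ℝ) ≤ c - b := by simp [hbc.le]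
  calc ((b : ℝ) - a) * ∑ i ∈ Ico b c, d i ≤ ((b : ℝ) - a) * (((c : ℝ) - b) * d b) :=
        mul_le_mul_of_nonneg_left upper hba
    _ = ((c : ℝ) - b) * (((b : ℝ) - a) * d b) := by ring
    _ ≤ ((c : ℝ) - b) * ∑ i ∈ Ico a b, d i := mul_le_mul_of_nonneg_left lower hcb

lemma sum_Ico_div_le_sum_Ico_div (hd : AntitoneOn d (Set.Iio m)) {l r s : ℕ} (hls : s ≤ l)
    (hml : l < m) (hrs : s < r) (hmr : r ≤ m) :
    (∑ i ∈ Ico l m, d i) / ((m : ℝ) - l) ≤ (∑ i ∈ Ico s r, d i) / ((r : ℝ) - s) := by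
  have hml' : (l : ℝ) < m := by exact_mod_cast hml
  have hrs' : (s : ℝ) < r := by exact_mod_cast hrs
  have hls' : (s : ℝ) ≤ l := by exact_mod_cast hls
  have hmr' : (r : ℝ) ≤ m := by exact_mod_cast hmr
  calc (∑ i ∈ Ico l m, d i) / ((m : ℝ) - l) ≤ (∑ i ∈ Ico s m, d i) / ((m : ℝ) - s) := by
        rw [← sum_Ico_consecutive d hls hml.le, div_le_div_iff₀ (by linarith) (by linarith)]
        nlinarith [sub_mul_sum_Ico_le_sub_mul_sum_Ico hd hls hml.le le_rfl]
    _ ≤ (∑ i ∈ Ico s r, d i) / ((r : ℝ) - s) := by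
        rw [← sum_Ico_consecutive d hrs.le hmr, div_le_div_iff₀ (by linarith) (by linarith)]
        nlinarith [sub_mul_sum_Ico_le_sub_mul_sum_Ico hd hrs.le hmr le_rfl]

end WindowAverage

theorem div_rpow_one_div_sub_le_of_mul_le_sq {a : ℕ → ℝ} {m l r s : ℕ} (hpos : ∀ k ≤ m, 0 < a k)
    (hconc : ∀ k, k + 2 ≤ m → a k * a (k + 2) ≤ a (k + 1) ^ 2) (hml : l < m) (hrs : s < r)
    (hmr : r ≤ m) (hls : s ≤ l) :
    (a m / a l) ^ (1 / ((m : ℝ) - l)) ≤ (a r / a s) ^ (1 / ((r : ℝ) - s)) := by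
  set d : ℕ → ℝ := fun k => Real.log (a (k + 1)) - Real.log (a k)
  have hd : AntitoneOn d (Set.Iio m) := by
    refine antitoneOn_of_add_one_le Set.ordConnected_Iio fun k _ _ hk => ?_
    simp only [Set.mem_Iio] at hk
    have h := Real.log_le_log (mul_pos (hpos k (by omega)) (hpos (k + 2) (by omega))) (hconc k hk)
    rw [Real.log_mul (hpos k (by omega)).ne' (hpos (k + 2) (by omega)).ne', Real.log_pow] at h
    simp only [d]
    push_cast at h
    linarith
  have hlog : ∀ i j, i ≤ j → j ≤ m → Real.log (a j / a i) = ∑ k ∈ Ico i j, d k := by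
    intro i j hij hjm
    rw [Real.log_div (hpos j hjm).ne' (hpos i (hij.trans hjm)).ne']
    exact (sum_Ico_sub (fun k => Real.log (a k)) hij).symm
  rw [Real.rpow_def_of_pos (div_pos (hpos m le_rfl) (hpos l hml.le)),
    Real.rpow_def_of_pos (div_pos (hpos r hmr) (hpos s (by omega))), Real.exp_le_exp,
    hlog l m hml.le le_rfl, hlog s r hrs.le hmr, mul_one_div, mul_one_div]
  exact sum_Ico_div_le_sum_Ico_div hd hls hml hrs hmr

lemma esym_div_choose_eq_esymmMean {n : ℕ} (k : ℕ) (lam : Fin n → ℝ) :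
    esym k lam / (n.choose k : ℝ) = (univ.val.map lam).esymmMean k := by
  rw [Multiset.esymmMean, Finset.esymm_map_val, Multiset.card_map, card_val, card_univ,
    Fintype.card_fin]
  rfl

theorem stmt9 {n : ℕ} (m l r s : ℕ) (hml : l < m) (hrs : s < r) (hmr : r ≤ m)
    (hls : s ≤ l) (hmn : m ≤ n) (lam : Fin n → ℝ) (hG : lam ∈ GardingCone n m) :
    ((esym m lam / (n.choose m : ℝ)) / (esym l lam / (n.choose l : ℝ))) ^
        ((1 : ℝ) / ((m : ℝ) - (l : ℝ))) ≤
    ((esym r lam / (n.choose r : ℝ)) / (esym s lam / (n.choose s : ℝ))) ^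
        ((1 : ℝ) / ((r : ℝ) - (s : ℝ))) := by
  have hpos : ∀ k ≤ m, 0 < esym k lam / (n.choose k : ℝ) := by
    intro k hk
    rcases k.eq_zero_or_pos with rfl | hk0
    · simp [esym]
    · exact div_pos (hG k hk0 hk) (by exact_mod_cast Nat.choose_pos (hk.trans hmn))
  refine div_rpow_one_div_sub_le_of_mul_le_sq hpos (fun k _ => ?_) hml hrs hmr hls
  simpa only [esym_div_choose_eq_esymmMean] using Multiset.esymmMean_mul_esymmMean_le_sq _ k
end
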